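/- For every integer n ≥ 1 and every real x with x ≠ −1, q_n(x) = (x+1)^{n} · B_n((x−1)/(x+1)). -/

import Mathlib

open Polynomial Finset

/-- The alternating derivative polynomials for tangent: `p 0 = X`,
`p (n+1) = (X^2 - 1) * (p n)'`. -/
noncomputable def p : ℕ → Polynomial ℝ
  | 0 => X
  | n + 1 => (X ^ 2 - 1) * derivative (p n)

/-- The alternating derivative polynomials for secant: `q 0 = 1`,
`q (n+1) = 2(X^2 - 1) * (q n)' + 2X * q n`. -/
noncomputable def q : ℕ → Polynomial ℝ
  | 0 => 1
  | n + 1 => 2 * (X ^ 2 - 1) * derivative (q n) + 2 * X * q n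

/-- The type `B` Eulerian polynomials: `B 0 = 1`,
`B n = (2nX + 1 - X)*(B (n-1)) + 2X*(1-X)*(B (n-1))'` for `n ≥ 1`. -/
noncomputable def B : ℕ → Polynomial ℝ
  | 0 => 1
  | n + 1 => (C (2 * ((n : ℝ) + 1)) * X + 1 - X) * B n + 2 * X * (1 - X) * derivative (B n)

/-! Induction on `n`. For `t ≠ -1` put `y = (t - 1)/(t + 1)` and `f(t) = (t + 1)^n P(y)`. Since
`2t = (t + 1)(1 + y)` and `dy/dt = 2/(t + 1)^2 = (1 - y)/(t + 1)`, the chain rule gives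
`2(t² - 1) f'(t) + 2t f(t) = (t + 1)^(n+1) ((2ny + 1 + y) P(y) + 2y(1 - y) P'(y))`,
so the recurrence of `q` turns `q_n = f` for `P = B_n` into the claim for `n + 1` with the recurrence
of `B`. The derivative of `q_n` at `t` is that of `f` because the two agree near `t`. -/

lemma hasDerivAt_pow_mul_eval_div (P : ℝ[X]) (n : ℕ) {x : ℝ} (hx : x + 1 ≠ 0) :
    HasDerivAt (fun t : ℝ => (t + 1) ^ n * P.eval ((t - 1) / (t + 1)))
      ((x + 1) ^ n * (n * P.eval ((x - 1) / (x + 1)) / (x + 1)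
        + 2 * (derivative P).eval ((x - 1) / (x + 1)) / (x + 1) ^ 2)) x := by
  have hlin : HasDerivAt (fun t : ℝ => t + 1) 1 x := (hasDerivAt_id x).add_const 1
  have hmob : HasDerivAt (fun t : ℝ => (t - 1) / (t + 1)) (2 / (x + 1) ^ 2) x :=
    (((hasDerivAt_id x).sub_const 1).div hlin hx).congr_deriv (by simp only [id]; ring)
  refine ((hlin.pow n).mul ((P.hasDerivAt _).comp x hmob)).congr_deriv ?_
  simp only [Function.comp_apply, Pi.pow_apply, mul_one]
  cases n with
  | zero => simp only [CharP.cast_eq_zero, pow_zero]; ring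
  | succ m => simp only [Nat.add_sub_cancel]; field_simp; ring

theorem q_eq_eulerianB_general (n : ℕ) (x : ℝ) (hx : x ≠ -1) :
    (q n).eval x = (x + 1) ^ n * (B n).eval ((x - 1) / (x + 1)) := by
  induction n generalizing x with
  | zero => simp [q, B]
  | succ n ih =>
    have hx1 : x + 1 ≠ 0 := fun h => hx (eq_neg_of_add_eq_zero_left h)
    have hq' : (derivative (q n)).eval x = (x + 1) ^ n * (n * (B n).eval ((x - 1) / (x + 1))
        / (x + 1) + 2 * (derivative (B n)).eval ((x - 1) / (x + 1)) / (x + 1) ^ 2) := by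
      rw [← Polynomial.deriv, Filter.EventuallyEq.deriv_eq (eventually_ne_nhds hx |>.mono ih),
        (hasDerivAt_pow_mul_eval_div (B n) n hx1).deriv]
    simp only [q, B, eval_add, eval_mul, eval_sub, eval_pow, eval_X, eval_one, eval_ofNat, eval_C]
    rw [hq', ih x hx]
    field_simp
    ring

theorem q_eq_eulerianB (n : ℕ) (hn : 1 ≤ n) (x : ℝ) (hx : x ≠ -1) :
    (q n).eval x = (x + 1) ^ n * (B n).eval ((x - 1) / (x + 1)) :=
  q_eq_eulerianB_general n x hx
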